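/- Let L be a real non-pencil supersolvable line arrangement with s lines and a modular point p of multiplicity m. Then t_2 ≥ max{s − m, m} ≥ s/2, where t_2 is the number of crossing points of multiplicity 2. -/

import Mathlib

open Projectivization

/-- The projective plane over `K`, with points (and, dually, lines) given by
projectivizing `K^3`. -/
abbrev PP (K : Type*) [Field K] := Projectivization K (Fin 3 → K)

/-- Incidence: the point `p` lies on the line `l` (given by dual coordinates):
the dot product of (any) homogeneous coordinates vanishes. -/
def incid {K : Type*} [Field K] (p l : PP K) : Prop :=
  dotProduct p.rep l.rep = 0

/-- The multiplicity of a point `p` with respect to a line arrangement `L`: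
the number of lines of `L` passing through `p`. -/
noncomputable def mult {K : Type*} [Field K] (L : Set (PP K)) (p : PP K) : ℕ :=
  {l ∈ L | incid p l}.ncard

/-- `p` is a crossing point of the arrangement `L`. -/
def crossing {K : Type*} [Field K] (L : Set (PP K)) (p : PP K) : Prop :=
  2 ≤ mult L p

/-- `p` is a modular point of `L`: a crossing point such that for every other
crossing point `q`, some line of `L` passes through both `p` and `q`. -/
def modular {K : Type*} [Field K] (L : Set (PP K)) (p : PP K) : Prop :=
  crossing L p ∧ ∀ q, crossing L q → q ≠ p → ∃ l ∈ L, incid p l ∧ incid q l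

/-- `t_k`: the number of crossing points of `L` of multiplicity exactly `k`. -/
noncomputable def tk {K : Type*} [Field K] (L : Set (PP K)) (k : ℕ) : ℕ :=
  {p | mult L p = k}.ncard

/-- A pencil: all lines pass through one common point. -/
def isPencil {K : Type*} [Field K] (L : Set (PP K)) : Prop :=
  ∃ p, ∀ l ∈ L, incid p l

/-- A near pencil: an arrangement of `s ≥ 3` lines, exactly `s - 1` of which
are concurrent. -/
def isNearPencil {K : Type*} [Field K] (L : Set (PP K)) : Prop :=
  3 ≤ L.ncard ∧ ∃ p, {l ∈ L | incid p l}.ncard + 1 = L.ncard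

/-!
Let `g` be a line of `L` missing the modular point `p`. The `m` lines through `p` cut `g` in `m`
distinct points; one of them that is not a double point lies on a third line of `L`, which misses
`p`, and distinct such points need distinct third lines. So `g` carries at least `2m - s + 1` double
points. Over an ordered field it also carries at least one: otherwise, taking a line through `p`
outside `L` as the line at infinity and `g` as the `x`-axis, the lines through `p` are verticals
`x = x_l`, each with a third line `y = c_l (x - x_l)`; by modularity any two of these meet on one of
the verticals, which an extremal pair rules out. By modularity again a double point lies on only one
line missing `p`, so `t₂ ≥ |D_g| + (s - m - 1)` for the double points `D_g` of a single such `g`.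
-/

open Projectivization Matrix

section

variable {ι K : Type*} [Field K] [LinearOrder K] [IsStrictOrderedRing K] {s : Set ι} {x c : ι → K}

-- A pair of maximal spread has weights of opposite signs.
theorem exists_mul_neg_of_forall_exists_pos (hs : s.Finite) (hs2 : s.Nontrivial)
    (hx : s.InjOn x)
    (h : ∀ i ∈ s, ∀ j ∈ s, i ≠ j → ∃ k ∈ s, 0 < c i * c j * ((x k - x i) * (x k - x j))) :
    ∃ i ∈ s, ∃ j ∈ s, c i * c j < 0 ∧ x i < x j := by
  obtain ⟨⟨i, j⟩, ⟨hi, hj⟩, hmax⟩ :=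
    Set.exists_max_image (s ×ˢ s) (fun q => x q.2 - x q.1) (hs.prod hs)
      (hs2.nonempty.prod hs2.nonempty)
  obtain ⟨a, ha, b, hb, hab⟩ := hs2
  have hspread : |x b - x a| ≤ x j - x i := by
    rcases abs_cases (x b - x a) with ⟨h, _⟩ | ⟨h, _⟩ <;> rw [h]
    · exact hmax (a, b) ⟨ha, hb⟩
    · simpa using hmax (b, a) ⟨hb, ha⟩
  have hij : x i < x j :=
    sub_pos.mp ((abs_pos.mpr (sub_ne_zero.mpr (hx.ne hb ha hab.symm))).trans_le hspread)
  obtain ⟨k, hk, hpos⟩ := h i hi j hj (fun h => hij.ne (congrArg x h))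
  have hik : x k - x i ≤ x j - x i := hmax (i, k) ⟨hi, hk⟩
  have hkj : x j - x k ≤ x j - x i := hmax (k, j) ⟨hk, hj⟩
  refine ⟨i, hi, j, hj, ?_, hij⟩
  have : (x k - x i) * (x k - x j) ≤ 0 :=
    mul_nonpos_of_nonneg_of_nonpos (by linarith) (by linarith)
  nlinarith

-- `y = c i * (x - x i)` is the line of slope `c i` through `(x i, 0)`: two of these lines do not
-- meet on any vertical `x = x k`.
theorem exists_ne_forall_mul_sub_ne (hs : s.Finite) (hs2 : s.Nontrivial) (hx : s.InjOn x)
    (hc : ∀ i ∈ s, c i ≠ 0) :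
    ∃ i ∈ s, ∃ j ∈ s, i ≠ j ∧ ∀ k ∈ s, c i * (x k - x i) ≠ c j * (x k - x j) := by
  by_contra! H
  have hsign : ∀ i ∈ s, ∀ j ∈ s, i ≠ j →
      ∃ k ∈ s, 0 < c i * c j * ((x k - x i) * (x k - x j)) := by
    intro i hi j hj hij
    obtain ⟨k, hk, hkij⟩ := H i hi j hj hij
    have hki : x k - x i ≠ 0 := by
      intro h0
      rw [h0, mul_zero, sub_eq_zero.mp h0] at hkij
      exact mul_ne_zero (hc j hj) (sub_ne_zero.mpr (hx.ne hi hj hij)) hkij.symm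
    have := hc i hi
    refine ⟨k, hk, ?_⟩
    calc 0 < (c i * (x k - x i)) ^ 2 := by positivity
      _ = _ := by rw [sq]; nth_rewrite 2 [hkij]; ring
  -- A pair of opposite weights and minimal spread has no witness in between, nor outside.
  obtain ⟨⟨i, j⟩, ⟨⟨hi, hj⟩, hcij, hij⟩, hmin⟩ :=
    Set.exists_min_image {q ∈ s ×ˢ s | c q.1 * c q.2 < 0 ∧ x q.1 < x q.2}
      (fun q => x q.2 - x q.1) ((hs.prod hs).subset (Set.sep_subset _ _))
      (by
        obtain ⟨i, hi, j, hj, h⟩ := exists_mul_neg_of_forall_exists_pos hs hs2 hx hsign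
        exact ⟨(i, j), ⟨hi, hj⟩, h⟩)
  dsimp only at hi hj hcij hij
  obtain ⟨k, hk, hpos⟩ := hsign i hi j hj (fun h => hij.ne (congrArg x h))
  have hxk : (x k - x i) * (x k - x j) < 0 := by nlinarith
  have hik : x i < x k := by nlinarith
  have hkj : x k < x j := by nlinarith
  have hck : c i * c k < 0 ∨ c k * c j < 0 := by
    by_contra! h
    have : 0 < c k ^ 2 := by have := hc k hk; positivity
    nlinarith [mul_nonneg h.1 h.2]
  rcases hck with hck | hck
  · have := hmin (i, k) ⟨⟨hi, hk⟩, hck, hik⟩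
    simp only at this
    linarith
  · have := hmin (k, j) ⟨⟨hk, hj⟩, hck, hkj⟩
    simp only at this
    linarith

end

section

variable {K : Type*} [Field K]

theorem dotProduct_cross_eq_zero_of_dotProduct_eq_zero {q u v w : Fin 3 → K} (hq : q ≠ 0)
    (hu : q ⬝ᵥ u = 0) (hv : q ⬝ᵥ v = 0) (hw : q ⬝ᵥ w = 0) : w ⬝ᵥ u ⨯₃ v = 0 := by
  rw [triple_product_eq_det]
  refine Matrix.exists_mulVec_eq_zero_iff.mp ⟨q, hq, ?_⟩
  ext i
  fin_cases i <;> simp [Matrix.mulVec, dotProduct_comm, hu, hv, hw]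

theorem exists_eq_smul_add_smul_of_dotProduct_cross_eq_zero {u v w : Fin 3 → K}
    (huv : u ⨯₃ v ≠ 0) (hw : w ⬝ᵥ u ⨯₃ v = 0) : ∃ α β : K, w = α • u + β • v := by
  obtain ⟨y, hy⟩ : ∃ y, y ⬝ᵥ u ⨯₃ v ≠ 0 := by
    by_contra! h
    exact huv (dotProduct_eq_zero_iff.mp fun y => by rw [dotProduct_comm]; exact h y)
  have cramer : (y ⬝ᵥ u ⨯₃ v) • w =
      (y ⬝ᵥ w ⨯₃ v) • u + (y ⬝ᵥ u ⨯₃ w) • v + (w ⬝ᵥ u ⨯₃ v) • y := by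
    ext i
    fin_cases i <;> simp [cross_apply, dotProduct, Fin.sum_univ_three] <;> ring
  rw [hw, zero_smul, add_zero] at cramer
  refine ⟨(y ⬝ᵥ u ⨯₃ v)⁻¹ * (y ⬝ᵥ w ⨯₃ v), (y ⬝ᵥ u ⨯₃ v)⁻¹ * (y ⬝ᵥ u ⨯₃ w), ?_⟩
  rw [mul_smul, mul_smul, ← smul_add, ← cramer, smul_smul, inv_mul_cancel₀ hy, one_smul]

theorem mul_sub_eq_mul_sub_of_dotProduct_eq_zero {G A Z q : Fin 3 → K}
    (hD : G ⬝ᵥ A ⨯₃ Z ≠ 0) (hq : q ≠ 0) {ci cj xi xj xk : K}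
    (hi : q ⬝ᵥ (G + ci • (A + xi • Z)) = 0) (hj : q ⬝ᵥ (G + cj • (A + xj • Z)) = 0)
    (hk : q ⬝ᵥ (A + xk • Z) = 0) : ci * (xk - xi) = cj * (xk - xj) := by
  have h := dotProduct_cross_eq_zero_of_dotProduct_eq_zero hq hi hj hk
  have expand : (A + xk • Z) ⬝ᵥ (G + ci • (A + xi • Z)) ⨯₃ (G + cj • (A + xj • Z)) =
      (cj * (xk - xj) - ci * (xk - xi)) * (G ⬝ᵥ A ⨯₃ Z) := by
    simp [cross_apply, dotProduct, Fin.sum_univ_three]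
    ring
  rw [expand, mul_eq_zero, sub_eq_zero] at h
  exact (h.resolve_right hD).symm

theorem incid_iff_orthogonal {x l : PP K} : incid x l ↔ x.orthogonal l := by
  conv_rhs => rw [← mk_rep x, ← mk_rep l]
  rfl

theorem incid_comm {x l : PP K} : incid x l ↔ incid l x := by
  rw [incid, incid, dotProduct_comm]

theorem incid_mk_right {x : PP K} {v : Fin 3 → K} (hv : v ≠ 0) :
    incid x (mk K v hv) ↔ x.rep ⬝ᵥ v = 0 := by
  rw [incid_iff_orthogonal]
  conv_lhs => rw [← mk_rep x]
  rfl

theorem incid_cross_left [DecidableEq K] {a b : PP K} (hab : a ≠ b) : incid (cross a b) a :=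
  incid_iff_orthogonal.mpr (cross_orthogonal_left hab)

theorem incid_cross_right [DecidableEq K] {a b : PP K} (hab : a ≠ b) : incid (cross a b) b :=
  incid_iff_orthogonal.mpr (cross_orthogonal_right hab)

theorem rep_cross_rep_ne_zero {a b : PP K} (hab : a ≠ b) : a.rep ⨯₃ b.rep ≠ 0 := by
  rw [← mk_rep a, ← mk_rep b, ne_eq, mk_eq_mk_iff_crossProduct_eq_zero] at hab
  exact hab

theorem eq_mk_cross_of_incid {x a b : PP K} (hab : a ≠ b) (hxa : incid x a) (hxb : incid x b) :
    x = mk K (a.rep ⨯₃ b.rep) (rep_cross_rep_ne_zero hab) := by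
  conv_lhs => rw [← mk_rep x]
  rw [mk_eq_mk_iff_crossProduct_eq_zero, cross_cross_eq_smul_sub_smul', dotProduct_comm a.rep]
  rw [incid] at hxa hxb
  rw [hxa, hxb, zero_smul, zero_smul, sub_zero]

theorem eq_of_incid_of_incid {x y a b : PP K} (hab : a ≠ b) (hxa : incid x a) (hxb : incid x b)
    (hya : incid y a) (hyb : incid y b) : x = y :=
  (eq_mk_cross_of_incid hab hxa hxb).trans (eq_mk_cross_of_incid hab hya hyb).symm

theorem eq_of_incid_of_incid' {x y a b : PP K} (hxy : x ≠ y) (hxa : incid x a) (hya : incid y a)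
    (hxb : incid x b) (hyb : incid y b) : a = b :=
  eq_of_incid_of_incid hxy (incid_comm.mp hxa) (incid_comm.mp hya) (incid_comm.mp hxb)
    (incid_comm.mp hyb)

theorem dotProduct_cross_ne_zero_of_not_incid {p a b g : PP K} (hab : a ≠ b) (hpa : incid p a)
    (hpb : incid p b) (hpg : ¬ incid p g) : g.rep ⬝ᵥ a.rep ⨯₃ b.rep ≠ 0 := by
  intro h
  obtain ⟨α, β, hg⟩ :=
    exists_eq_smul_add_smul_of_dotProduct_cross_eq_zero (rep_cross_rep_ne_zero hab) h
  apply hpg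
  rw [incid, hg, dotProduct_add, dotProduct_smul, dotProduct_smul, hpa, hpb, smul_zero,
    smul_zero, add_zero]

theorem exists_eq_mk_add_smul {u v : Fin 3 → K} (hu : u ≠ 0) (hv : v ≠ 0)
    (huv : mk K u hu ≠ mk K v hv) {l : PP K} (hl : l.rep ⬝ᵥ u ⨯₃ v = 0) (hlv : l ≠ mk K v hv) :
    ∃ c : K, ∃ h : u + c • v ≠ 0, l = mk K (u + c • v) h := by
  rw [ne_eq, mk_eq_mk_iff_crossProduct_eq_zero] at huv
  obtain ⟨α, β, hαβ⟩ := exists_eq_smul_add_smul_of_dotProduct_cross_eq_zero huv hl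
  have hα : α ≠ 0 := by
    rintro rfl
    rw [zero_smul, zero_add] at hαβ
    exact hlv (by rw [← mk_rep l, mk_eq_mk_iff']; exact ⟨β, hαβ.symm⟩)
  have hrep : l.rep = α • (u + (β / α) • v) := by
    rw [hαβ, smul_add, smul_smul, mul_div_cancel₀ _ hα]
  have hne : u + (β / α) • v ≠ 0 := fun h0 => l.rep_nonzero (by rw [hrep, h0, smul_zero])
  exact ⟨β / α, hne, by rw [← mk_rep l, mk_eq_mk_iff']; exact ⟨α, hrep.symm⟩⟩

theorem exists_eq_mk_add_smul_of_incid {x g l h : PP K} {N : Fin 3 → K} (hN : N ≠ 0)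
    (hl : l = mk K N hN) (hgl : g ≠ l) (hxg : incid x g) (hxl : incid x l) (hxh : incid x h)
    (hhg : h ≠ g) (hhl : h ≠ l) : ∃ c : K, c ≠ 0 ∧ ∃ hc, h = mk K (g.rep + c • N) hc := by
  subst hl
  rw [incid_mk_right] at hxl
  obtain ⟨c, hc, rfl⟩ := exists_eq_mk_add_smul g.rep_nonzero hN (by rwa [mk_rep])
    (dotProduct_cross_eq_zero_of_dotProduct_eq_zero x.rep_nonzero hxg hxl hxh) hhl
  refine ⟨c, fun hc0 => hhg ?_, hc, rfl⟩
  simp only [hc0, zero_smul, add_zero, mk_rep]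

theorem injOn_cross_of_not_incid [DecidableEq K] {p g : PP K} (hpg : ¬ incid p g) :
    Set.InjOn (cross g) {l | incid p l} := fun l hl l' hl' e => by
  by_contra hne
  have hgl : g ≠ l := fun h => hpg (h ▸ hl)
  have hgl' : g ≠ l' := fun h => hpg (h ▸ hl')
  exact hpg (eq_of_incid_of_incid hne (incid_cross_right hgl) (e ▸ incid_cross_right hgl') hl hl'
    ▸ incid_cross_left hgl)

theorem eq_of_incid_cross_of_incid_cross [DecidableEq K] {p g h l l' : PP K}
    (hpg : ¬ incid p g) (hl : incid p l) (hl' : incid p l') (hhg : h ≠ g)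
    (hlh : incid (cross g l) h) (hl'h : incid (cross g l') h) : l = l' := by
  have hgl : g ≠ l := fun e => hpg (e ▸ hl)
  have hgl' : g ≠ l' := fun e => hpg (e ▸ hl')
  refine injOn_cross_of_not_incid hpg hl hl' ?_
  by_contra hne
  exact hhg (eq_of_incid_of_incid' hne hlh hl'h (incid_cross_left hgl) (incid_cross_left hgl'))

theorem infinite_setOf_incid [Infinite K] {p a b : PP K} (hab : a ≠ b) (hpa : incid p a)
    (hpb : incid p b) : {l | incid p l}.Infinite := by
  have hcross : ∀ s t : K,
      (a.rep + s • b.rep) ⨯₃ (a.rep + t • b.rep) = (t - s) • a.rep ⨯₃ b.rep := by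
    intro s t
    ext i
    fin_cases i <;> simp [cross_apply] <;> ring
  have hne : ∀ t : K, a.rep + t • b.rep ≠ 0 := fun t h0 => by
    have h1 := hcross t (t + 1)
    rw [h0, map_zero, LinearMap.zero_apply, add_sub_cancel_left, one_smul] at h1
    exact rep_cross_rep_ne_zero hab h1.symm
  refine Set.infinite_of_injective_forall_mem (f := fun t => mk K (a.rep + t • b.rep) (hne t))
    (fun s t hst => ?_) (fun t => ?_)
  · rw [mk_eq_mk_iff_crossProduct_eq_zero, hcross, smul_eq_zero] at hst
    exact (sub_eq_zero.mp (hst.resolve_right (rep_cross_rep_ne_zero hab))).symm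
  · rw [Set.mem_ofPred_eq, incid_mk_right, dotProduct_add, dotProduct_smul, hpa, hpb,
      smul_zero, add_zero]

def doublePointsOn (L : Set (PP K)) (g : PP K) : Set (PP K) :=
  {x | mult L x = 2 ∧ incid x g}

variable {L : Set (PP K)}

theorem two_le_mult (hL : L.Finite) {x a b : PP K} (ha : a ∈ L) (hb : b ∈ L) (hab : a ≠ b)
    (hxa : incid x a) (hxb : incid x b) : 2 ≤ mult L x :=
  (Set.one_lt_ncard_iff (hL.subset (Set.sep_subset _ _))).mpr ⟨a, b, ⟨ha, hxa⟩, ⟨hb, hxb⟩, hab⟩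

theorem mult_eq_two_iff (hL : L.Finite) {x a b : PP K} (ha : a ∈ L) (hb : b ∈ L) (hab : a ≠ b)
    (hxa : incid x a) (hxb : incid x b) :
    mult L x = 2 ↔ ∀ c ∈ L, incid x c → c = a ∨ c = b := by
  have hsub : {a, b} ⊆ {l ∈ L | incid x l} :=
    Set.insert_subset ⟨ha, hxa⟩ (Set.singleton_subset_iff.mpr ⟨hb, hxb⟩)
  rw [mult, ← Set.ncard_pair hab]
  constructor
  · intro h c hc hxc
    have heq := Set.eq_of_subset_of_ncard_le hsub h.le (hL.subset (Set.sep_subset _ _))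
    exact (heq ▸ ⟨hc, hxc⟩ : c ∈ ({a, b} : Set (PP K)))
  · intro h
    congr 1
    exact Set.Subset.antisymm (fun c hc => h c hc.1 hc.2) hsub

theorem finite_setOf_crossing (hL : L.Finite) : {x | crossing L x}.Finite := by
  have hsub : {x | crossing L x} ⊆ ⋃ a ∈ L, ⋃ b ∈ L, {x | a ≠ b ∧ incid x a ∧ incid x b} := by
    intro x hx
    obtain ⟨a, b, ⟨ha, hxa⟩, ⟨hb, hxb⟩, hab⟩ :=
      (Set.one_lt_ncard_iff (hL.subset (Set.sep_subset _ _))).mp hx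
    exact Set.mem_biUnion ha (Set.mem_biUnion hb ⟨hab, hxa, hxb⟩)
  refine (hL.biUnion fun a _ => hL.biUnion fun b _ => Set.Subsingleton.finite ?_).subset hsub
  rintro x ⟨hab, hxa, hxb⟩ y ⟨-, hya, hyb⟩
  exact eq_of_incid_of_incid hab hxa hxb hya hyb

theorem exists_third_line (hL : L.Finite) {p x g l : PP K} (hgL : g ∈ L) (hpg : ¬ incid p g)
    (hlL : l ∈ L) (hpl : incid p l) (hxg : incid x g) (hxl : incid x l) (hx : mult L x ≠ 2) :
    ∃ h ∈ L, ¬ incid p h ∧ h ≠ g ∧ incid x h := by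
  have hgl : g ≠ l := fun h => hpg (h ▸ hpl)
  obtain ⟨h, hhL, hxh, hhg, hhl⟩ : ∃ h ∈ L, incid x h ∧ h ≠ g ∧ h ≠ l := by
    by_contra! H
    exact hx ((mult_eq_two_iff hL hgL hlL hgl hxg hxl).mpr fun c hc hxc =>
      or_iff_not_imp_left.mpr (H c hc hxc))
  have hxp : x ≠ p := fun h => hpg (h ▸ hxg)
  exact ⟨h, hhL, fun hph => hhl (eq_of_incid_of_incid' hxp hxh hph hxl hpl), hhg, hxh⟩

theorem exists_incid_meet_of_modular (hL : L.Finite) {p a b : PP K} (hp : modular L p)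
    (ha : a ∈ L) (hb : b ∈ L) (hab : a ≠ b) (hpa : ¬ incid p a) :
    ∃ l ∈ L, incid p l ∧ ∃ q, incid q a ∧ incid q b ∧ incid q l := by
  classical
  have hqa := incid_cross_left hab
  have hqb := incid_cross_right hab
  obtain ⟨l, hl, hpl, hql⟩ := hp.2 _ (two_le_mult hL ha hb hab hqa hqb) fun h => hpa (h ▸ hqa)
  exact ⟨l, hl, hpl, _, hqa, hqb, hql⟩

theorem eq_of_mult_eq_two_of_modular (hL : L.Finite) {p y a b : PP K} (hp : modular L p)
    (hy : mult L y = 2) (ha : a ∈ L) (hb : b ∈ L) (hpa : ¬ incid p a) (hpb : ¬ incid p b)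
    (hya : incid y a) (hyb : incid y b) : a = b := by
  by_contra hab
  obtain ⟨l, hl, hpl, hyl⟩ := hp.2 y hy.ge fun h => hpa (h ▸ hya)
  rcases (mult_eq_two_iff hL ha hb hab hya hyb).mp hy l hl hyl with rfl | rfl
  · exact hpa hpl
  · exact hpb hpl

theorem doublePointsOn_nonempty [LinearOrder K] [IsStrictOrderedRing K] (hL : L.Finite)
    {p g : PP K} (hp : modular L p) (hgL : g ∈ L) (hpg : ¬ incid p g) :
    (doublePointsOn L g).Nonempty := by
  classical
  by_contra hno
  set Lp := {l ∈ L | incid p l}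
  have hgl : ∀ l ∈ Lp, g ≠ l := fun l hl h => hpg (h ▸ hl.2)
  have hLpfin : Lp.Finite := hL.subset (Set.sep_subset _ _)
  have hLp2 : Lp.Nontrivial := (Set.one_lt_ncard_iff_nontrivial_and_finite.mp hp.1).1
  obtain ⟨a, ⟨haL, hpa⟩, b, ⟨-, hpb⟩, hab⟩ := id hLp2
  obtain ⟨z, hpz, hzL⟩ := ((infinite_setOf_incid hab hpa hpb).sdiff hL).nonempty
  have haz : a ≠ z := fun h => hzL (h ▸ haL)
  -- In the chart with `z` at infinity and `g` as the `x`-axis, `l ∈ Lp` is the vertical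
  -- `x = x l` and its third line `h l` is `y = c l * (x - x l)`.
  have hcoord : ∀ l ∈ Lp, ∃ x : K, ∃ h, l = mk K (a.rep + x • z.rep) h := fun l hl =>
    exists_eq_mk_add_smul a.rep_nonzero z.rep_nonzero (by rwa [mk_rep, mk_rep])
      (dotProduct_cross_eq_zero_of_dotProduct_eq_zero p.rep_nonzero hpa hpz hl.2)
      (by rw [mk_rep]; rintro rfl; exact hzL hl.1)
  choose! x hx0 hx using hcoord
  have hthird : ∀ l ∈ Lp, ∃ h ∈ L, ¬ incid p h ∧ h ≠ g ∧ incid (cross g l) h ∧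
      ∃ c : K, c ≠ 0 ∧ ∃ hc, h = mk K (g.rep + c • (a.rep + x l • z.rep)) hc := by
    intro l hl
    have hXg := incid_cross_left (hgl l hl)
    have hXl := incid_cross_right (hgl l hl)
    obtain ⟨h, hhL, hph, hhg, hXh⟩ :=
      exists_third_line hL hgL hpg hl.1 hl.2 hXg hXl fun h2 => hno ⟨_, h2, hXg⟩
    exact ⟨h, hhL, hph, hhg, hXh, exists_eq_mk_add_smul_of_incid (hx0 l hl) (hx l hl) (hgl l hl)
      hXg hXl hXh hhg fun e => hph (e ▸ hl.2)⟩
  choose! h hhL hph hhg hXh c hc0 hc hh using hthird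
  have hxinj : Set.InjOn x Lp := fun l hl l' hl' e => by
    rw [hx l hl, hx l' hl']
    simp only [e]
  obtain ⟨i, hi, j, hj, hij, hne⟩ := exists_ne_forall_mul_sub_ne hLpfin hLp2 hxinj hc0
  have hhij : h i ≠ h j := fun e =>
    hij (eq_of_incid_cross_of_incid_cross hpg hi.2 hj.2 (hhg i hi) (hXh i hi) (e ▸ hXh j hj))
  obtain ⟨k, hkL, hpk, q, hqi, hqj, hqk⟩ :=
    exists_incid_meet_of_modular hL hp (hhL i hi) (hhL j hj) hhij (hph i hi)
  rw [hh i hi, incid_mk_right] at hqi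
  rw [hh j hj, incid_mk_right] at hqj
  rw [hx k ⟨hkL, hpk⟩, incid_mk_right] at hqk
  exact hne k ⟨hkL, hpk⟩ (mul_sub_eq_mul_sub_of_dotProduct_eq_zero
    (dotProduct_cross_ne_zero_of_not_incid haz hpa hpz hpg) q.rep_nonzero hqi hqj hqk)

theorem finite_doublePointsOn (hL : L.Finite) (g : PP K) : (doublePointsOn L g).Finite :=
  (finite_setOf_crossing hL).subset fun _ hx => hx.1.ge

theorem mult_le_ncard_doublePointsOn_add (hL : L.Finite) {p g : PP K} (hgL : g ∈ L)
    (hpg : ¬ incid p g) :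
    mult L p ≤ (doublePointsOn L g).ncard + ({l ∈ L | ¬ incid p l} \ {g}).ncard := by
  classical
  set Lp := {l ∈ L | incid p l}
  have hgl : ∀ l ∈ Lp, g ≠ l := fun l hl h => hpg (h ▸ hl.2)
  set good := {l ∈ Lp | mult L (cross g l) = 2}
  set bad := {l ∈ Lp | mult L (cross g l) ≠ 2}
  have hgood : good.ncard ≤ (doublePointsOn L g).ncard :=
    Set.ncard_le_ncard_of_injOn (cross g) (fun l hl => ⟨hl.2, incid_cross_left (hgl l hl.1)⟩)
      ((injOn_cross_of_not_incid hpg).mono fun l hl => hl.1.2) (finite_doublePointsOn hL g)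
  have hbad : bad.ncard ≤ ({l ∈ L | ¬ incid p l} \ {g}).ncard := by
    have : ∀ l ∈ bad, ∃ h ∈ {l ∈ L | ¬ incid p l} \ {g}, incid (cross g l) h := fun l hl => by
      obtain ⟨h, hhL, hph, hhg, hXh⟩ := exists_third_line hL hgL hpg hl.1.1 hl.1.2
        (incid_cross_left (hgl l hl.1)) (incid_cross_right (hgl l hl.1)) hl.2
      exact ⟨h, ⟨⟨hhL, hph⟩, hhg⟩, hXh⟩
    choose! f hf hXf using this
    exact Set.ncard_le_ncard_of_injOn f hf (fun l hl l' hl' e => eq_of_incid_cross_of_incid_cross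
      hpg hl.1.2 hl'.1.2 (hf l hl).2 (hXf l hl) (e ▸ hXf l' hl'))
      (hL.subset (Set.sep_subset _ _)).sdiff
  calc Lp.ncard ≤ (good ∪ bad).ncard :=
        Set.ncard_le_ncard (fun l hl => (em _).elim (Or.inl ⟨hl, ·⟩) (Or.inr ⟨hl, ·⟩))
          (hL.subset fun _ hl => hl.elim (·.1.1) (·.1.1))
    _ ≤ good.ncard + bad.ncard := Set.ncard_union_le _ _
    _ ≤ _ := add_le_add hgood hbad

theorem ncard_doublePointsOn_add_ncard_le [LinearOrder K] [IsStrictOrderedRing K]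
    (hL : L.Finite) {p g : PP K} (hp : modular L p) (hgL : g ∈ L) (hpg : ¬ incid p g) :
    (doublePointsOn L g).ncard + ({l ∈ L | ¬ incid p l} \ {g}).ncard ≤ tk L 2 := by
  set G := {l ∈ L | ¬ incid p l} \ {g}
  have hd : ∀ h ∈ G, (doublePointsOn L h).Nonempty := fun h hh =>
    doublePointsOn_nonempty hL hp hh.1.1 hh.1.2
  choose! d hd using hd
  have hdisj : Disjoint (doublePointsOn L g) (d '' G) := by
    refine Set.disjoint_left.mpr fun y hy ⟨h, hh, hdy⟩ => hh.2 ?_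
    exact eq_of_mult_eq_two_of_modular hL hp (hdy ▸ hd h hh).1 hh.1.1 hgL hh.1.2 hpg
      (hdy ▸ hd h hh).2 hy.2
  have hinj : Set.InjOn d G := fun h hh h' hh' e => eq_of_mult_eq_two_of_modular hL hp
    (hd h hh).1 hh.1.1 hh'.1.1 hh.1.2 hh'.1.2 (hd h hh).2 (e ▸ (hd h' hh').2)
  calc (doublePointsOn L g).ncard + G.ncard = (doublePointsOn L g ∪ d '' G).ncard := by
        rw [Set.ncard_union_eq hdisj (finite_doublePointsOn hL g)
          (((hL.subset (Set.sep_subset _ _)).sdiff).image d), hinj.ncard_image]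
    _ ≤ tk L 2 := Set.ncard_le_ncard
        (Set.union_subset (fun y hy => hy.1) (Set.image_subset_iff.mpr fun h hh => (hd h hh).1))
        ((finite_setOf_crossing hL).subset fun _ hx => Nat.le_of_eq hx.symm)

end

/-- a real non-pencil supersolvable arrangement of s lines with a
modular point of multiplicity m satisfies t₂ ≥ max{s - m, m} ≥ s/2. -/
theorem real_supersolvable_t2_bound (L : Set (PP ℝ))
    (hfin : L.Finite) (hnp : ¬ isPencil L) (p : PP ℝ) (m : ℕ)
    (hp : modular L p) (hpm : mult L p = m) :
    max (L.ncard - m) m ≤ tk L 2 ∧ L.ncard ≤ 2 * tk L 2 := by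
  have hsplit : m + {l ∈ L | ¬ incid p l}.ncard = L.ncard := by
    rw [← hpm]
    exact Set.ncard_inter_add_ncard_sdiff_eq_ncard L {l | incid p l} hfin
  obtain ⟨g, hg⟩ : {l ∈ L | ¬ incid p l}.Nonempty := by
    by_contra! h
    exact hnp ⟨p, fun l hl => by_contra fun hpl => h.subset ⟨hl, hpl⟩⟩
  have hG := Set.ncard_sdiff_singleton_add_one hg (hfin.subset (Set.sep_subset _ _))
  have hD := (Set.ncard_pos (finite_doublePointsOn hfin g)).mpr
    (doublePointsOn_nonempty hfin hp hg.1 hg.2)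
  have hm := hpm ▸ mult_le_ncard_doublePointsOn_add hfin hg.1 hg.2
  have ht := ncard_doublePointsOn_add_ncard_le hfin hp hg.1 hg.2
  exact ⟨max_le (by omega) (by omega), by omega⟩
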